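/- arXiv:2406.09081 — 5 statements merged into one kernel-verified Lean document; each statement's English description precedes it below -/
import Mathlib

section
/- Let x ∈ pℤ_p have Schneider continued fraction digits (a_i(x), b_i(x)) for 1 ≤ i ≤ n, with convergents P_n/Q_n defined by the standard recursion. Then x − P_n(x)/Q_n(x) ∈ p^{1 + a_1(x) + ⋯ + a_n(x)} ℤ_p. -/
open scoped Classical

/-- The first digit `b_1(x)` of Schneider's continued fraction. -/
noncomputable def schneiderB1 (p : ℕ) [Fact p.Prime] (x : ℚ_[p]) : ℕ :=
  if h : ∃ b : ℕ, 1 ≤ b ∧ b ≤ p - 1 ∧ ‖(p : ℚ_[p]) ^ x.valuation / x - (b : ℚ_[p])‖ < 1 then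
    h.choose
  else 0

/-- Schneider's continued fraction map `T_p`. -/
noncomputable def schneiderT (p : ℕ) [Fact p.Prime] (x : ℚ_[p]) : ℚ_[p] :=
  if x = 0 then 0 else (p : ℚ_[p]) ^ x.valuation / x - (schneiderB1 p x : ℚ_[p])

/-- The digit `a_n(x) = v_p(T_p^{n-1} x)` (as an integer), for `n ≥ 1`. -/
noncomputable def schneiderA (p : ℕ) [Fact p.Prime] (n : ℕ) (x : ℚ_[p]) : ℤ :=
  ((schneiderT p)^[n - 1] x).valuation

/-!
Write `tₘ = T_p^m(x)`. One step of the map reads `tₘ₋₁ (bₘ + tₘ) = p^{aₘ}`, and induction on the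
recursion turns this into `x (Qₘ + tₘ Qₘ₋₁) = Pₘ + tₘ Pₘ₋₁`. Hence
`x - Pₙ/Qₙ = tₙ (Pₙ₋₁Qₙ - PₙQₙ₋₁) / ((Qₙ + tₙQₙ₋₁) Qₙ)`. The determinant is `± p^{a₁ + ⋯ + aₙ}`;
the `Qₘ` and `Qₙ + tₙQₙ₋₁` are units, because the `bₘ` are units while `tₙ` and the `p^{aₘ}` with
`m ≥ 2` lie in `pℤ_p`; and `|tₙ| ≤ 1/p`.
-/

section Ultrametric

variable {S : Type*} [SeminormedAddCommGroup S] [IsUltrametricDist S]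

theorem norm_add_eq_left_of_norm_lt {a e : S} (h : ‖e‖ < ‖a‖) : ‖a + e‖ = ‖a‖ := by
  rw [IsUltrametricDist.norm_add_eq_max_of_norm_ne_norm h.ne', max_eq_left h.le]

end Ultrametric

theorem Finset.prod_zpow_eq_zpow_sum₀ {ι K : Type*} [CommGroupWithZero K] {a : K} (ha : a ≠ 0)
    (s : Finset ι) (f : ι → ℤ) : ∏ i ∈ s, a ^ f i = a ^ ∑ i ∈ s, f i := by
  induction s using Finset.cons_induction with
  | empty => simp
  | cons i s hi ih => rw [prod_cons, sum_cons, ih, zpow_add₀ ha]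

section Convergents

variable {K : Type*} {b c y P Q : ℕ → K}

theorem convergent_determinant_eq [CommRing K] (hP0 : P 0 = 0) (hQ0 : Q 0 = 1)
    (hP1 : P 1 = c 1) (hPrec : ∀ m, 2 ≤ m → P m = b m * P (m - 1) + c m * P (m - 2))
    (hQrec : ∀ m, 2 ≤ m → Q m = b m * Q (m - 1) + c m * Q (m - 2)) :
    ∀ m, 1 ≤ m →
      P m * Q (m - 1) - P (m - 1) * Q m = (-1) ^ (m + 1) * ∏ i ∈ Finset.Icc 1 m, c i := by
  intro m hm
  induction m, hm using Nat.le_induction with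
  | base => simp [hP0, hP1, hQ0]
  | succ m hm ih =>
    simp only [Nat.add_sub_cancel]
    rw [Finset.prod_Icc_succ_top (by omega), hPrec (m + 1) (by omega), hQrec (m + 1) (by omega)]
    simp only [Nat.add_sub_cancel, show m + 1 - 2 = m - 1 by omega]
    linear_combination (-c (m + 1)) * ih

theorem mul_denom_add_eq_num_add [CommRing K] {n : ℕ} (hP0 : P 0 = 0) (hQ0 : Q 0 = 1)
    (hP1 : P 1 = c 1) (hQ1 : Q 1 = b 1)
    (hPrec : ∀ m, 2 ≤ m → P m = b m * P (m - 1) + c m * P (m - 2))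
    (hQrec : ∀ m, 2 ≤ m → Q m = b m * Q (m - 1) + c m * Q (m - 2))
    (hy : ∀ m, 1 ≤ m → m ≤ n → y (m - 1) * (b m + y m) = c m) :
    ∀ m, 1 ≤ m → m ≤ n → y 0 * (Q m + y m * Q (m - 1)) = P m + y m * P (m - 1) := by
  intro m hm
  induction m, hm using Nat.le_induction with
  | base =>
    intro h1
    simpa [hP0, hP1, hQ0, hQ1] using hy 1 le_rfl h1
  | succ m hm ih =>
    intro hmn
    have hstep := hy (m + 1) (by omega) hmn
    simp only [Nat.add_sub_cancel] at hstep ⊢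
    rw [hPrec (m + 1) (by omega), hQrec (m + 1) (by omega), ← hstep]
    simp only [Nat.add_sub_cancel, show m + 1 - 2 = m - 1 by omega]
    linear_combination (b (m + 1) + y (m + 1)) * ih (by omega)

theorem norm_denom_eq_one [NormedField K] [IsUltrametricDist K] {n : ℕ} (hQ0 : Q 0 = 1)
    (hQ1 : Q 1 = b 1) (hQrec : ∀ m, 2 ≤ m → Q m = b m * Q (m - 1) + c m * Q (m - 2))
    (hb : ∀ m, 1 ≤ m → m ≤ n → ‖b m‖ = 1) (hc : ∀ m, 2 ≤ m → m ≤ n → ‖c m‖ < 1) :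
    ∀ m ≤ n, ‖Q m‖ = 1 := by
  suffices h : ∀ m, m + 1 ≤ n → ‖Q m‖ = 1 ∧ ‖Q (m + 1)‖ = 1 by
    intro m hm
    rcases m with _ | m
    · simp [hQ0]
    · exact (h m hm).2
  intro m
  induction m with
  | zero => intro h; exact ⟨by simp [hQ0], by rw [hQ1]; exact hb 1 le_rfl h⟩
  | succ m ih =>
    intro hmn
    obtain ⟨hQm, hQm1⟩ := ih (by omega)
    refine ⟨hQm1, ?_⟩
    have hlead : ‖b (m + 2) * Q (m + 1)‖ = 1 := by
      rw [norm_mul, hb _ (by omega) hmn, hQm1, one_mul]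
    rw [hQrec (m + 2) (by omega)]
    change ‖b (m + 2) * Q (m + 1) + c (m + 2) * Q m‖ = 1
    rw [← hlead]
    apply norm_add_eq_left_of_norm_lt
    rw [hlead, norm_mul, hQm, mul_one]
    exact hc _ (by omega) hmn

end Convergents

theorem sub_div_eq_of_mul_add_eq {K : Type*} [Field K] {x r r' q q' t : K}
    (h : x * (q + t * q') = r + t * r') (hq : q ≠ 0) (hd : q + t * q' ≠ 0) :
    x - r / q = t * (r' * q - r * q') / ((q + t * q') * q) := by
  field_simp
  linear_combination q * h

section Digits

variable {p : ℕ} [Fact p.Prime]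

theorem Padic.norm_p_zpow_valuation {y : ℚ_[p]} (hy : y ≠ 0) :
    ‖(p : ℚ_[p]) ^ y.valuation‖ = ‖y‖ := by
  rw [Padic.norm_p_zpow, Padic.norm_eq_zpow_neg_valuation hy]

theorem exists_schneider_digit {y : ℚ_[p]} (hy : y ≠ 0) :
    ∃ b : ℕ, 1 ≤ b ∧ b ≤ p - 1 ∧ ‖(p : ℚ_[p]) ^ y.valuation / y - (b : ℚ_[p])‖ < 1 := by
  have hu : ‖(p : ℚ_[p]) ^ y.valuation / y‖ = 1 := by
    rw [norm_div, Padic.norm_p_zpow_valuation hy, div_self (norm_ne_zero_iff.mpr hy)]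
  let u : ℤ_[p] := ⟨_, hu.le⟩
  obtain ⟨b, hbp, hb⟩ := PadicInt.exists_mem_range u
  rw [IsLocalRing.mem_maximalIdeal, PadicInt.mem_nonunits, PadicInt.norm_def, PadicInt.coe_sub,
    PadicInt.coe_natCast] at hb
  refine ⟨b, Nat.one_le_iff_ne_zero.mpr ?_, by omega, hb⟩
  rintro rfl
  rw [Nat.cast_zero, sub_zero] at hb
  exact hb.ne hu

theorem schneiderB1_spec {y : ℚ_[p]} (hy : y ≠ 0) :
    1 ≤ schneiderB1 p y ∧ schneiderB1 p y ≤ p - 1 ∧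
      ‖(p : ℚ_[p]) ^ y.valuation / y - (schneiderB1 p y : ℚ_[p])‖ < 1 := by
  rw [schneiderB1, dif_pos (exists_schneider_digit hy)]
  exact (exists_schneider_digit hy).choose_spec

theorem norm_schneiderB1 {y : ℚ_[p]} (hy : y ≠ 0) : ‖(schneiderB1 p y : ℚ_[p])‖ = 1 := by
  obtain ⟨h1, h2, -⟩ := schneiderB1_spec hy
  have hp := (Fact.out : p.Prime)
  rw [Padic.norm_natCast_eq_one_iff, hp.coprime_iff_not_dvd]
  exact Nat.not_dvd_of_pos_of_lt h1 (by omega)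

theorem norm_schneiderT_le (y : ℚ_[p]) : ‖schneiderT p y‖ ≤ (p : ℝ) ^ (-1 : ℤ) := by
  rw [Padic.norm_le_pow_iff_norm_lt_pow_add_one, neg_add_cancel, zpow_zero]
  by_cases hy : y = 0
  · simp [schneiderT, hy]
  · rw [schneiderT, if_neg hy]
    exact (schneiderB1_spec hy).2.2

theorem norm_iterate_schneiderT_le {k : ℕ} (hk : 1 ≤ k) (x : ℚ_[p]) :
    ‖(schneiderT p)^[k] x‖ ≤ (p : ℝ) ^ (-1 : ℤ) := by
  obtain ⟨k, rfl⟩ : ∃ j, k = j + 1 := ⟨k - 1, by omega⟩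
  rw [Function.iterate_succ_apply']
  exact norm_schneiderT_le _

theorem norm_iterate_schneiderT_lt_one {k : ℕ} (hk : 1 ≤ k) (x : ℚ_[p]) :
    ‖(schneiderT p)^[k] x‖ < 1 :=
  (norm_iterate_schneiderT_le hk x).trans_lt <|
    zpow_lt_one_of_neg₀ (by exact_mod_cast (Fact.out : p.Prime).one_lt) (by simp)

theorem norm_p_zpow_schneiderA_lt_one {m : ℕ} (hm : 2 ≤ m) {x : ℚ_[p]}
    (hx : (schneiderT p)^[m - 1] x ≠ 0) : ‖(p : ℚ_[p]) ^ schneiderA p m x‖ < 1 := by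
  rw [schneiderA, Padic.norm_p_zpow_valuation hx]
  exact norm_iterate_schneiderT_lt_one (by omega) x

theorem mul_schneiderB1_add_schneiderT {y : ℚ_[p]} (hy : y ≠ 0) :
    y * (schneiderB1 p y + schneiderT p y) = (p : ℚ_[p]) ^ y.valuation := by
  rw [schneiderT, if_neg hy, add_sub_cancel, mul_div_cancel₀ _ hy]

theorem iterate_mul_schneiderB1_add_iterate {x : ℚ_[p]} {m : ℕ} (hm : 1 ≤ m)
    (hx : (schneiderT p)^[m - 1] x ≠ 0) :
    (schneiderT p)^[m - 1] x * (schneiderB1 p ((schneiderT p)^[m - 1] x) + (schneiderT p)^[m] x) =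
      (p : ℚ_[p]) ^ schneiderA p m x := by
  obtain ⟨k, rfl⟩ : ∃ k, m = k + 1 := ⟨m - 1, by omega⟩
  rw [Function.iterate_succ_apply']
  exact mul_schneiderB1_add_schneiderT hx

end Digits

theorem stmt_5_general (p : ℕ) [hp : Fact p.Prime] (x : ℚ_[p]) (n : ℕ) (hn : 1 ≤ n)
    (hne : ∀ k, k < n → (schneiderT p)^[k] x ≠ 0)
    (P Q : ℕ → ℚ_[p])
    (hP0 : P 0 = 0) (hQ0 : Q 0 = 1)
    (hP1 : P 1 = (p : ℚ_[p]) ^ schneiderA p 1 x)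
    (hQ1 : Q 1 = (schneiderB1 p x : ℚ_[p]))
    (hPrec : ∀ m, 2 ≤ m → P m = (schneiderB1 p ((schneiderT p)^[m - 1] x) : ℚ_[p]) * P (m - 1)
      + (p : ℚ_[p]) ^ schneiderA p m x * P (m - 2))
    (hQrec : ∀ m, 2 ≤ m → Q m = (schneiderB1 p ((schneiderT p)^[m - 1] x) : ℚ_[p]) * Q (m - 1)
      + (p : ℚ_[p]) ^ schneiderA p m x * Q (m - 2)) :
    ‖x - P n / Q n‖ ≤ (p : ℝ) ^ (-(1 + ∑ i ∈ Finset.Icc 1 n, schneiderA p i x)) := by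
  have hQ : ∀ m ≤ n, ‖Q m‖ = 1 :=
    norm_denom_eq_one hQ0 hQ1 hQrec (fun m _ hmn ↦ norm_schneiderB1 (hne _ (by omega)))
      fun m hm hmn ↦ norm_p_zpow_schneiderA_lt_one hm (hne _ (by omega))
  have hkey := mul_denom_add_eq_num_add hP0 hQ0 hP1 hQ1 hPrec hQrec
    (fun m hm hmn ↦ iterate_mul_schneiderB1_add_iterate hm (hne _ (by omega))) n hn le_rfl
  rw [Function.iterate_zero_apply] at hkey
  have hdet := convergent_determinant_eq hP0 hQ0 hP1 hPrec hQrec n hn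
  set t := (schneiderT p)^[n] x
  have hQn : ‖Q n‖ = 1 := hQ n le_rfl
  have hd : ‖Q n + t * Q (n - 1)‖ = 1 := by
    have hsmall : ‖t * Q (n - 1)‖ < ‖Q n‖ := by
      rw [norm_mul, hQ _ (by omega), mul_one, hQn]
      exact norm_iterate_schneiderT_lt_one hn x
    rw [norm_add_eq_left_of_norm_lt hsmall, hQn]
  calc ‖x - P n / Q n‖ = ‖t‖ * ‖P n * Q (n - 1) - P (n - 1) * Q n‖ := by
        rw [sub_div_eq_of_mul_add_eq hkey (norm_ne_zero_iff.mp (by simp [hQn]))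
          (norm_ne_zero_iff.mp (by simp [hd])), norm_div, norm_mul, norm_mul, hd, hQn,
          mul_one, div_one, ← norm_neg (P n * _ - _), neg_sub]
    _ = ‖t‖ * (p : ℝ) ^ (-∑ i ∈ Finset.Icc 1 n, schneiderA p i x) := by
        rw [hdet, norm_mul, norm_pow, norm_neg, norm_one, one_pow, one_mul,
          Finset.prod_zpow_eq_zpow_sum₀ (by exact_mod_cast hp.out.ne_zero), Padic.norm_p_zpow]
    _ ≤ (p : ℝ) ^ (-1 : ℤ) * (p : ℝ) ^ (-∑ i ∈ Finset.Icc 1 n, schneiderA p i x) := by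
        gcongr
        exact norm_iterate_schneiderT_le hn x
    _ = (p : ℝ) ^ (-(1 + ∑ i ∈ Finset.Icc 1 n, schneiderA p i x)) := by
        rw [← zpow_add₀ (by exact_mod_cast hp.out.ne_zero), neg_add]

/-- If `x ∈ pℤ_p` has its first `n` Schneider digits defined, and `P_k/Q_k` are the
convergents given by the standard recursion, then
`x - P_n/Q_n ∈ p^{1 + a_1(x) + ⋯ + a_n(x)} ℤ_p`. -/
theorem stmt_5 (p : ℕ) [hp : Fact p.Prime] (x : ℚ_[p]) (hx : ‖x‖ < 1) (n : ℕ) (hn : 1 ≤ n)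
    (hne : ∀ k, k < n → (schneiderT p)^[k] x ≠ 0)
    (P Q : ℕ → ℚ_[p])
    (hP0 : P 0 = 0) (hQ0 : Q 0 = 1)
    (hP1 : P 1 = (p : ℚ_[p]) ^ schneiderA p 1 x)
    (hQ1 : Q 1 = (schneiderB1 p x : ℚ_[p]))
    (hPrec : ∀ m, 2 ≤ m → P m = (schneiderB1 p ((schneiderT p)^[m - 1] x) : ℚ_[p]) * P (m - 1)
      + (p : ℚ_[p]) ^ schneiderA p m x * P (m - 2))
    (hQrec : ∀ m, 2 ≤ m → Q m = (schneiderB1 p ((schneiderT p)^[m - 1] x) : ℚ_[p]) * Q (m - 1)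
      + (p : ℚ_[p]) ^ schneiderA p m x * Q (m - 2)) :
    ‖x - P n / Q n‖ ≤ (p : ℝ) ^ (-(1 + ∑ i ∈ Finset.Icc 1 n, schneiderA p i x)) :=
  stmt_5_general p (hp := hp) x n hn hne P Q hP0 hQ0 hP1 hQ1 hPrec hQrec
end

section
/- The cylinder set I_n(a_1,b_1;…;a_n,b_n) = {x ∈ pℤ_p : a_i(x) = a_i and b_i(x) = b_i for 1 ≤ i ≤ n} of Schneider's p-adic continued fraction is a closed ball: for any x in the cylinder, I_n(a_1,b_1;…;a_n,b_n) = { y ∈ pℤ_p : |y − x|_p ≤ p^{−(1 + a_1 + ⋯ + a_n)} }. -/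
open scoped Classical

/-- The cylinder `I_n(a_1,b_1;…;a_n,b_n)` of Schneider's continued fraction: the set of
`x ∈ pℤ_p` (elements of norm `< 1`) whose first `n` digit pairs are defined and equal
`(a_1,b_1),…,(a_n,b_n)`. -/
noncomputable def schneiderCylinder (p : ℕ) [Fact p.Prime] (n : ℕ) (a b : ℕ → ℕ) :
    Set ℚ_[p] :=
  {x | ‖x‖ < 1 ∧ ∀ i, 1 ≤ i → i ≤ n →
    (schneiderT p)^[i - 1] x ≠ 0 ∧
    ((schneiderT p)^[i - 1] x).valuation = (a i : ℤ) ∧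
    schneiderB1 p ((schneiderT p)^[i - 1] x) = b i}

section Helpers

variable {p : ℕ} [hp : Fact p.Prime]

private lemma one_lt_p' : (1 : ℝ) < (p : ℝ) := by exact_mod_cast hp.out.one_lt

private lemma p_pos' : (0 : ℝ) < (p : ℝ) := by exact_mod_cast hp.out.pos

/-- valuation is determined by the norm -/
private lemma val_eq_of_norm {x : ℚ_[p]} (hx : x ≠ 0) {a : ℤ}
    (h : ‖x‖ = (p : ℝ) ^ (-a)) : x.valuation = a := by
  have h2 : (p : ℝ) ^ (-x.valuation) = (p : ℝ) ^ (-a) := by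
    rw [← Padic.norm_eq_zpow_neg_valuation hx, h]
  have := zpow_right_injective₀ (p_pos' (p := p)) (by linarith [one_lt_p' (p := p)]) h2
  omega

private lemma norm_unit {x : ℚ_[p]} (hx : x ≠ 0) :
    ‖(p : ℚ_[p]) ^ x.valuation / x‖ = 1 := by
  rw [norm_div, Padic.norm_p_zpow, Padic.norm_eq_zpow_neg_valuation hx, div_self]
  exact ne_of_gt (zpow_pos (p_pos' (p := p)) _)

private lemma norm_nat_digit {b : ℕ} (hb1 : 1 ≤ b) (hb2 : b ≤ p - 1) :
    ‖(b : ℚ_[p])‖ = 1 := by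
  have h2 : (2 : ℕ) ≤ p := hp.out.two_le
  have hle : ‖((b : ℤ) : ℚ_[p])‖ ≤ 1 := Padic.norm_int_le_one _
  have hnlt : ¬ ‖((b : ℤ) : ℚ_[p])‖ < 1 := by
    rw [Padic.norm_intCast_lt_one_iff]
    intro hdvd
    have := Int.le_of_dvd (by exact_mod_cast hb1) hdvd
    omega
  push_cast at hle hnlt ⊢
  linarith

/-- existence of a digit for a unit -/
private lemma exists_digit {u : ℚ_[p]} (hu : ‖u‖ = 1) :
    ∃ b : ℕ, 1 ≤ b ∧ b ≤ p - 1 ∧ ‖u - (b : ℚ_[p])‖ < 1 := by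
  have h2 : (2 : ℕ) ≤ p := hp.out.two_le
  set z : ℤ_[p] := ⟨u, by rw [hu]⟩ with hz
  have hzu : (z : ℚ_[p]) = u := rfl
  set b : ℕ := z.appr 1 with hbdef
  have hspec := PadicInt.appr_spec 1 z
  rw [Ideal.mem_span_singleton] at hspec
  obtain ⟨c, hc⟩ := hspec
  have hnorm : ‖z - (b : ℤ_[p])‖ < 1 := by
    rw [hc]
    calc ‖(p : ℤ_[p]) ^ 1 * c‖ ≤ ‖(p : ℤ_[p]) ^ 1‖ * 1 := by
          rw [norm_mul]
          exact mul_le_mul_of_nonneg_left c.norm_le_one (norm_nonneg _)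
      _ = (p : ℝ)⁻¹ := by rw [pow_one, PadicInt.norm_p, mul_one]
      _ < 1 := by
          rw [inv_lt_one_iff₀]
          right; exact one_lt_p'
  have hnormq : ‖u - (b : ℚ_[p])‖ < 1 := by
    have : ((z - (b : ℤ_[p]) : ℤ_[p]) : ℚ_[p]) = u - (b : ℚ_[p]) := by push_cast [hzu]; ring
    rw [← this, ← PadicInt.norm_def]
    exact hnorm
  have hblt : b < p := by
    have := PadicInt.appr_lt z 1
    simpa using this
  have hbpos : 1 ≤ b := by
    rcases Nat.eq_zero_or_pos b with h0 | h1
    · exfalso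
      rw [h0] at hnormq
      simp only [Nat.cast_zero, sub_zero] at hnormq
      rw [hu] at hnormq
      exact lt_irrefl _ hnormq
    · exact h1
  exact ⟨b, hbpos, by omega, hnormq⟩

private lemma digit_unique {u : ℚ_[p]} {b c : ℕ}
    (hb1 : 1 ≤ b) (hb2 : b ≤ p - 1) (hc1 : 1 ≤ c) (hc2 : c ≤ p - 1)
    (h1 : ‖u - (b : ℚ_[p])‖ < 1) (h2 : ‖u - (c : ℚ_[p])‖ < 1) : b = c := by
  have h2p : (2 : ℕ) ≤ p := hp.out.two_le
  have hd : ‖(((b : ℤ) - c : ℤ) : ℚ_[p])‖ < 1 := by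
    have : (((b : ℤ) - c : ℤ) : ℚ_[p]) = (u - (c : ℚ_[p])) - (u - (b : ℚ_[p])) := by
      push_cast; ring
    rw [this]
    have hna := Padic.nonarchimedean (u - (c : ℚ_[p])) (-(u - (b : ℚ_[p])))
    rw [← sub_eq_add_neg, norm_neg] at hna
    calc ‖(u - (c : ℚ_[p])) - (u - (b : ℚ_[p]))‖
        ≤ max ‖u - (c : ℚ_[p])‖ ‖u - (b : ℚ_[p])‖ := hna
      _ < 1 := max_lt h2 h1
  rw [Padic.norm_intCast_lt_one_iff] at hd
  have := Int.eq_zero_of_abs_lt_dvd hd (by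
    rw [abs_lt]; constructor <;> [skip; skip] <;> omega)
  omega

private lemma B1_eq {x : ℚ_[p]} {b : ℕ} (hb1 : 1 ≤ b) (hb2 : b ≤ p - 1)
    (h : ‖(p : ℚ_[p]) ^ x.valuation / x - (b : ℚ_[p])‖ < 1) : schneiderB1 p x = b := by
  have hex : ∃ c : ℕ, 1 ≤ c ∧ c ≤ p - 1 ∧
      ‖(p : ℚ_[p]) ^ x.valuation / x - (c : ℚ_[p])‖ < 1 := ⟨b, hb1, hb2, h⟩
  rw [schneiderB1, dif_pos hex]
  obtain ⟨hc1, hc2, hc3⟩ := hex.choose_spec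
  exact digit_unique hc1 hc2 hb1 hb2 hc3 h

private lemma B1_spec {x : ℚ_[p]} (hx : x ≠ 0) :
    1 ≤ schneiderB1 p x ∧ schneiderB1 p x ≤ p - 1 ∧
    ‖(p : ℚ_[p]) ^ x.valuation / x - (schneiderB1 p x : ℚ_[p])‖ < 1 := by
  obtain ⟨b, hb1, hb2, hb3⟩ := exists_digit (norm_unit hx)
  have := B1_eq hb1 hb2 hb3
  rw [this]
  exact ⟨hb1, hb2, hb3⟩

private lemma T_def {x : ℚ_[p]} (hx : x ≠ 0) :
    schneiderT p x = (p : ℚ_[p]) ^ x.valuation / x - (schneiderB1 p x : ℚ_[p]) :=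
  if_neg hx

private lemma norm_T_lt (x : ℚ_[p]) : ‖schneiderT p x‖ < 1 := by
  by_cases hx : x = 0
  · simp [schneiderT, hx]
  · rw [T_def hx]; exact (B1_spec hx).2.2

private lemma norm_lt_one_iff_le {w : ℚ_[p]} : ‖w‖ < 1 ↔ ‖w‖ ≤ (p : ℝ) ^ (-1 : ℤ) := by
  have := Padic.norm_le_pow_iff_norm_lt_pow_add_one w (-1)
  rw [this]
  norm_num

/-- Reconstruction: `x = p^v / (b1 + T x)`. -/
private lemma eq_phi {x : ℚ_[p]} (hx : x ≠ 0) :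
    x = (p : ℚ_[p]) ^ x.valuation / ((schneiderB1 p x : ℚ_[p]) + schneiderT p x) := by
  rw [T_def hx]
  have hu : (schneiderB1 p x : ℚ_[p]) + ((p : ℚ_[p]) ^ x.valuation / x - (schneiderB1 p x : ℚ_[p]))
      = (p : ℚ_[p]) ^ x.valuation / x := by ring
  rw [hu]
  have hpne : (p : ℚ_[p]) ^ x.valuation ≠ 0 := by
    apply zpow_ne_zero
    exact_mod_cast hp.out.ne_zero
  field_simp

/-- norm of `b + z` for a digit `b` and `‖z‖ < 1`. -/
private lemma norm_b_add_z {b : ℕ} (hb1 : 1 ≤ b) (hb2 : b ≤ p - 1) {z : ℚ_[p]}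
    (hz : ‖z‖ < 1) : ‖(b : ℚ_[p]) + z‖ = 1 := by
  have hb : ‖(b : ℚ_[p])‖ = 1 := norm_nat_digit hb1 hb2
  have hne : ‖(b : ℚ_[p])‖ ≠ ‖z‖ := by rw [hb]; linarith
  rw [Padic.add_eq_max_of_ne hne, hb]
  rw [sup_eq_left.mpr (le_of_lt (hb ▸ hz))]

/-- The map φ(z) = p^a/(b+z). -/
private lemma phi_props {a b : ℕ} (ha : 1 ≤ a) (hb1 : 1 ≤ b) (hb2 : b ≤ p - 1)
    {z : ℚ_[p]} (hz : ‖z‖ < 1) :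
    let w := (p : ℚ_[p]) ^ (a : ℤ) / ((b : ℚ_[p]) + z)
    w ≠ 0 ∧ ‖w‖ = (p : ℝ) ^ (-(a : ℤ)) ∧ w.valuation = (a : ℤ) ∧
      schneiderB1 p w = b ∧ schneiderT p w = z := by
  intro w
  have hpne : (p : ℚ_[p]) ^ (a : ℤ) ≠ 0 := by
    apply zpow_ne_zero; exact_mod_cast hp.out.ne_zero
  have hbz : ‖(b : ℚ_[p]) + z‖ = 1 := norm_b_add_z hb1 hb2 hz
  have hbzne : (b : ℚ_[p]) + z ≠ 0 := by
    intro h; rw [h, norm_zero] at hbz; norm_num at hbz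
  have hwne : w ≠ 0 := div_ne_zero hpne hbzne
  have hwnorm : ‖w‖ = (p : ℝ) ^ (-(a : ℤ)) := by
    show ‖(p : ℚ_[p]) ^ (a : ℤ) / ((b : ℚ_[p]) + z)‖ = _
    rw [norm_div, Padic.norm_p_zpow, hbz, div_one]
  have hwval : w.valuation = (a : ℤ) := val_eq_of_norm hwne hwnorm
  have hinv : (p : ℚ_[p]) ^ w.valuation / w = (b : ℚ_[p]) + z := by
    rw [hwval]
    show (p : ℚ_[p]) ^ (a : ℤ) / ((p : ℚ_[p]) ^ (a : ℤ) / ((b : ℚ_[p]) + z)) = _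
    rw [div_div_eq_mul_div, mul_comm, mul_div_assoc, div_self hpne, mul_one]
  have hB1 : schneiderB1 p w = b := by
    apply B1_eq hb1 hb2
    rw [hinv]
    simpa using hz
  have hT : schneiderT p w = z := by
    rw [T_def hwne, hinv, hB1]; ring
  exact ⟨hwne, hwnorm, hwval, hB1, hT⟩

end Helpers

section Main

variable {p : ℕ} [hp : Fact p.Prime]

private lemma div_sub_div_norm {A : ℤ} {x y : ℚ_[p]} (hx : x ≠ 0) (hy : y ≠ 0)
    (hvx : ‖x‖ = (p : ℝ) ^ (-A)) (hvy : ‖y‖ = (p : ℝ) ^ (-A)) :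
    ‖(p : ℚ_[p]) ^ A / y - (p : ℚ_[p]) ^ A / x‖ = (p : ℝ) ^ A * ‖y - x‖ := by
  have key : (p : ℚ_[p]) ^ A / y - (p : ℚ_[p]) ^ A / x
      = (p : ℚ_[p]) ^ A * (x - y) / (x * y) := by
    field_simp
  rw [key, norm_div, norm_mul, norm_mul, Padic.norm_p_zpow, hvx, hvy]
  rw [show ‖x - y‖ = ‖y - x‖ from norm_sub_rev x y]
  have hp0 : (p : ℝ) ^ (-A) ≠ 0 := ne_of_gt (zpow_pos (p_pos' (p := p)) _)
  rw [div_eq_iff (by exact mul_ne_zero hp0 hp0)]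
  rw [zpow_neg]
  have hpA : (p : ℝ) ^ A ≠ 0 := ne_of_gt (zpow_pos (p_pos' (p := p)) _)
  field_simp

private lemma T_sub_T {x y : ℚ_[p]} (hx : x ≠ 0) (hy : y ≠ 0) {A : ℤ}
    (hvx : x.valuation = A) (hvy : y.valuation = A)
    (hB : schneiderB1 p x = schneiderB1 p y) :
    schneiderT p y - schneiderT p x = (p : ℚ_[p]) ^ A / y - (p : ℚ_[p]) ^ A / x := by
  rw [T_def hx, T_def hy, hvx, hvy, hB]
  ring

private lemma mem_cyl_succ {n : ℕ} {a b : ℕ → ℕ} {y : ℚ_[p]} :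
    y ∈ schneiderCylinder p (n + 1) a b ↔
      (‖y‖ < 1 ∧ y ≠ 0 ∧ y.valuation = (a 1 : ℤ) ∧ schneiderB1 p y = b 1) ∧
      schneiderT p y ∈ schneiderCylinder p n (fun i => a (i + 1)) (fun i => b (i + 1)) := by
  constructor
  · rintro ⟨hy, h⟩
    obtain ⟨h1, h2, h3⟩ := h 1 le_rfl (by omega)
    simp only [Nat.sub_self, Function.iterate_zero, id_eq] at h1 h2 h3
    refine ⟨⟨hy, h1, h2, h3⟩, norm_T_lt y, ?_⟩
    intro i hi1 hi2
    have hh := h (i + 1) (by omega) (by omega)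
    have hit : (schneiderT p)^[i + 1 - 1] y = (schneiderT p)^[i - 1] (schneiderT p y) := by
      rw [show i + 1 - 1 = (i - 1) + 1 by omega, Function.iterate_succ_apply]
    rw [hit] at hh
    exact hh
  · rintro ⟨⟨hy, h1, h2, h3⟩, _, hT2⟩
    refine ⟨hy, ?_⟩
    intro i hi1 hi2
    rcases Nat.lt_or_ge i 2 with h | h
    · have : i = 1 := by omega
      subst this
      simpa using ⟨h1, h2, h3⟩
    · have hh := hT2 (i - 1) (by omega) (by omega)
      have hit : (schneiderT p)^[i - 1] y = (schneiderT p)^[i - 1 - 1] (schneiderT p y) := by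
        conv_lhs => rw [show i - 1 = (i - 1 - 1) + 1 by omega]
        rw [Function.iterate_succ_apply]
      rw [hit]
      rcases hh with ⟨hh1, hh2, hh3⟩
      exact ⟨hh1, by simpa [show i - 1 + 1 = i from by omega] using hh2,
        by simpa [show i - 1 + 1 = i from by omega] using hh3⟩

private lemma sum_Icc_shift {M : Type*} [AddCommMonoid M] (m : ℕ) (f : ℕ → M) :
    ∑ i ∈ Finset.Icc 1 (m + 1), f i = f 1 + ∑ i ∈ Finset.Icc 1 m, f (i + 1) := by
  induction m with
  | zero => simp
  | succ k ih =>
    rw [Finset.sum_Icc_succ_top (by omega : 1 ≤ k + 1 + 1), ih,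
      Finset.sum_Icc_succ_top (by omega : 1 ≤ k + 1), add_assoc]

private lemma key_lemma (n : ℕ) : ∀ (a b : ℕ → ℕ),
    (∀ i, 1 ≤ i → i ≤ n → 1 ≤ a i) → (∀ i, 1 ≤ i → i ≤ n → 1 ≤ b i ∧ b i ≤ p - 1) →
    ∀ x ∈ schneiderCylinder p n a b,
      schneiderCylinder p n a b =
        {y : ℚ_[p] | ‖y - x‖ ≤ (p : ℝ) ^ (-(1 + (∑ i ∈ Finset.Icc 1 n, a i) : ℤ))} := by
  induction n with
  | zero =>
    intro a b _ _ x hx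
    have hx' : ‖x‖ < 1 := hx.1
    ext y
    simp only [schneiderCylinder, Set.mem_setOf_eq]
    rw [show (-(1 + (∑ i ∈ Finset.Icc 1 0, a i) : ℤ)) = (-1 : ℤ) by simp]
    constructor
    · rintro ⟨hy, -⟩
      rw [norm_lt_one_iff_le] at hy
      rw [norm_lt_one_iff_le] at hx'
      have hna := Padic.nonarchimedean y (-x)
      rw [← sub_eq_add_neg, norm_neg] at hna
      exact le_trans hna (max_le hy hx')
    · intro hy
      refine ⟨?_, by intro i h1 h2; omega⟩
      have hna := Padic.nonarchimedean (y - x) x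
      rw [sub_add_cancel] at hna
      calc ‖y‖ ≤ max ‖y - x‖ ‖x‖ := hna
        _ < 1 := by
            apply max_lt _ hx.1
            calc ‖y - x‖ ≤ (p : ℝ) ^ (-1 : ℤ) := hy
              _ < 1 := by
                  rw [zpow_neg, zpow_one, inv_lt_one_iff₀]
                  right; exact one_lt_p'
  | succ n ih =>
    intro a b ha hb x hx
    have hppos := p_pos' (p := p)
    have hpone := one_lt_p' (p := p)
    have hb1 := hb 1 le_rfl (by omega)
    rw [mem_cyl_succ] at hx
    obtain ⟨⟨hxlt, hxne, hxval, hxB⟩, hTx⟩ := hx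
    have ha' : ∀ i, 1 ≤ i → i ≤ n → 1 ≤ (fun i => a (i + 1)) i :=
      fun i h1 h2 => ha (i + 1) (by omega) (by omega)
    have hb' : ∀ i, 1 ≤ i → i ≤ n →
        1 ≤ (fun i => b (i + 1)) i ∧ (fun i => b (i + 1)) i ≤ p - 1 :=
      fun i h1 h2 => hb (i + 1) (by omega) (by omega)
    have hIH := ih _ _ ha' hb' (schneiderT p x) hTx
    beta_reduce at hIH
    set S : ℤ := ((∑ i ∈ Finset.Icc 1 n, a (i + 1) : ℕ) : ℤ) with hS
    have hSnn : 0 ≤ S := by rw [hS]; positivity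
    have hexp : (-(1 + (∑ i ∈ Finset.Icc 1 (n + 1), a i) : ℤ))
        = -(a 1 : ℤ) + (-(1 + S)) := by
      rw [hS, show (∑ i ∈ Finset.Icc 1 (n + 1), a i) = a 1 + ∑ i ∈ Finset.Icc 1 n, a (i + 1)
        from sum_Icc_shift n a]
      push_cast
      ring
    have hrad : (p : ℝ) ^ (-(1 + (∑ i ∈ Finset.Icc 1 (n + 1), a i) : ℤ))
        = (p : ℝ) ^ (-(a 1 : ℤ)) * (p : ℝ) ^ (-(1 + S)) := by
      rw [hexp, zpow_add₀ (ne_of_gt hppos)]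
    have hxnorm : ‖x‖ = (p : ℝ) ^ (-(a 1 : ℤ)) := by
      rw [Padic.norm_eq_zpow_neg_valuation hxne, hxval]
    ext y
    simp only [Set.mem_setOf_eq]
    constructor
    · intro hy
      rw [mem_cyl_succ] at hy
      obtain ⟨⟨hylt, hyne, hyval, hyB⟩, hTy⟩ := hy
      rw [hIH] at hTy
      simp only [Set.mem_setOf_eq] at hTy
      have hynorm : ‖y‖ = (p : ℝ) ^ (-(a 1 : ℤ)) := by
        rw [Padic.norm_eq_zpow_neg_valuation hyne, hyval]
      have hdist : ‖schneiderT p y - schneiderT p x‖ = (p : ℝ) ^ ((a 1 : ℤ)) * ‖y - x‖ := by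
        rw [T_sub_T hxne hyne hxval hyval (hxB.trans hyB.symm)]
        exact div_sub_div_norm hxne hyne hxnorm hynorm
      have hyx : ‖y - x‖ = (p : ℝ) ^ (-(a 1 : ℤ)) * ‖schneiderT p y - schneiderT p x‖ := by
        rw [hdist, zpow_neg, ← mul_assoc, inv_mul_cancel₀ (ne_of_gt (zpow_pos hppos _)), one_mul]
      rw [hrad, hyx]
      exact mul_le_mul_of_nonneg_left hTy (le_of_lt (zpow_pos hppos _))
    · intro hy
      have hrad_lt : (p : ℝ) ^ (-(1 + (∑ i ∈ Finset.Icc 1 (n + 1), a i) : ℤ))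
          < (p : ℝ) ^ (-(a 1 : ℤ)) := by
        apply zpow_lt_zpow_right₀ hpone
        omega
      have hyx_lt : ‖y - x‖ < ‖x‖ := lt_of_le_of_lt hy (by rw [hxnorm]; exact hrad_lt)
      have hynorm : ‖y‖ = ‖x‖ := by
        have hyd : y = x + (y - x) := by ring
        rw [hyd, Padic.add_eq_max_of_ne (ne_of_lt hyx_lt).symm,
          max_eq_left hyx_lt.le]
      have hyne : y ≠ 0 := by
        intro h
        rw [h, norm_zero] at hynorm
        exact hxne (norm_eq_zero.mp hynorm.symm)
      have hynorm' : ‖y‖ = (p : ℝ) ^ (-(a 1 : ℤ)) := hynorm.trans hxnorm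
      have hyval : y.valuation = (a 1 : ℤ) := val_eq_of_norm hyne hynorm'
      have hylt : ‖y‖ < 1 := hynorm ▸ hxlt
      have hdiv : ‖(p : ℚ_[p]) ^ (a 1 : ℤ) / y - (p : ℚ_[p]) ^ (a 1 : ℤ) / x‖
          = (p : ℝ) ^ (a 1 : ℤ) * ‖y - x‖ := div_sub_div_norm hxne hyne hxnorm hynorm'
      have hdivle : ‖(p : ℚ_[p]) ^ (a 1 : ℤ) / y - (p : ℚ_[p]) ^ (a 1 : ℤ) / x‖
          ≤ (p : ℝ) ^ (-(1 + S)) := by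
        rw [hdiv]
        calc (p : ℝ) ^ (a 1 : ℤ) * ‖y - x‖
            ≤ (p : ℝ) ^ (a 1 : ℤ) * ((p : ℝ) ^ (-(a 1 : ℤ)) * (p : ℝ) ^ (-(1 + S))) := by
              rw [← hrad]
              exact mul_le_mul_of_nonneg_left hy (le_of_lt (zpow_pos hppos _))
          _ = (p : ℝ) ^ (-(1 + S)) := by
              rw [← mul_assoc, ← zpow_add₀ (ne_of_gt hppos), add_neg_cancel, zpow_zero, one_mul]
      have hdivlt : ‖(p : ℚ_[p]) ^ (a 1 : ℤ) / y - (p : ℚ_[p]) ^ (a 1 : ℤ) / x‖ < 1 := by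
        apply lt_of_le_of_lt hdivle
        calc (p : ℝ) ^ (-(1 + S)) < (p : ℝ) ^ (0 : ℤ) := zpow_lt_zpow_right₀ hpone (by omega)
          _ = 1 := zpow_zero _
      have hBx : ‖(p : ℚ_[p]) ^ (a 1 : ℤ) / x - ((b 1 : ℕ) : ℚ_[p])‖ < 1 := by
        have := (B1_spec hxne).2.2
        rw [hxval, hxB] at this
        exact this
      have hBy : ‖(p : ℚ_[p]) ^ (a 1 : ℤ) / y - ((b 1 : ℕ) : ℚ_[p])‖ < 1 := by
        have hid : (p : ℚ_[p]) ^ (a 1 : ℤ) / y - ((b 1 : ℕ) : ℚ_[p])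
            = ((p : ℚ_[p]) ^ (a 1 : ℤ) / y - (p : ℚ_[p]) ^ (a 1 : ℤ) / x)
              + ((p : ℚ_[p]) ^ (a 1 : ℤ) / x - ((b 1 : ℕ) : ℚ_[p])) := by ring
        rw [hid]
        exact lt_of_le_of_lt (Padic.nonarchimedean _ _) (max_lt hdivlt hBx)
      have hyB : schneiderB1 p y = b 1 := by
        apply B1_eq hb1.1 hb1.2
        rw [hyval]
        exact hBy
      have hTyx : ‖schneiderT p y - schneiderT p x‖ ≤ (p : ℝ) ^ (-(1 + S)) := by
        rw [T_sub_T hxne hyne hxval hyval (hxB.trans hyB.symm)]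
        exact hdivle
      rw [mem_cyl_succ]
      refine ⟨⟨hylt, hyne, hyval, hyB⟩, ?_⟩
      rw [hIH]
      exact hTyx

end Main

/-- A cylinder of order `n` is a closed ball: for any `x` in the cylinder,
`I_n(a_1,b_1;…;a_n,b_n) = {y : |y - x|_p ≤ p^{-(1+a_1+⋯+a_n)}}`. -/
theorem stmt_6 (p : ℕ) [hp : Fact p.Prime] (n : ℕ) (hn : 1 ≤ n) (a b : ℕ → ℕ)
    (ha : ∀ i, 1 ≤ i → i ≤ n → 1 ≤ a i)
    (hb : ∀ i, 1 ≤ i → i ≤ n → 1 ≤ b i ∧ b i ≤ p - 1)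
    (x : ℚ_[p]) (hx : x ∈ schneiderCylinder p n a b) :
    schneiderCylinder p n a b =
      {y : ℚ_[p] | ‖y - x‖ ≤ (p : ℝ) ^ (-(1 + (∑ i ∈ Finset.Icc 1 n, a i) : ℤ))} := by
  exact key_lemma n a b ha hb x hx
end

section
/- For each pair (i, j) with i a positive integer and j ∈ {1,…,p−1}, the map f_{ij}(x) = p^i/(x + j) maps pℤ_p into pℤ_p and is a similarity contraction with ratio p^{−i}: for all x, y ∈ pℤ_p, |f_{ij}(x) − f_{ij}(y)|_p = p^{−i} |x − y|_p. -/
/-- For `i ≥ 1` and `j ∈ {1,…,p-1}`, the map `f_{ij}(x) = p^i/(x+j)` maps `pℤ_p` into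
`pℤ_p`, and is a similarity contraction of ratio `p^{-i}`:
`|f_{ij}(x) - f_{ij}(y)|_p = p^{-i} |x - y|_p` for all `x, y ∈ pℤ_p`. -/
theorem stmt_10 (p : ℕ) [hp : Fact p.Prime] (i j : ℕ) (hi : 1 ≤ i)
    (hj : 1 ≤ j ∧ j ≤ p - 1) :
    (∀ x : ℚ_[p], ‖x‖ < 1 → ‖(p : ℚ_[p]) ^ i / (x + (j : ℚ_[p]))‖ < 1) ∧
    (∀ x y : ℚ_[p], ‖x‖ < 1 → ‖y‖ < 1 →
      ‖(p : ℚ_[p]) ^ i / (x + (j : ℚ_[p])) - (p : ℚ_[p]) ^ i / (y + (j : ℚ_[p]))‖ =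
        (p : ℝ) ^ (-(i : ℤ)) * ‖x - y‖) := by
  have hp2 : 2 ≤ p := hp.out.two_le
  have hjlt : j < p := lt_of_le_of_lt hj.2 (by omega)
  have hjnorm : ‖((j : ℤ) : ℚ_[p])‖ = 1 := by
    rcases lt_or_eq_of_le (Padic.norm_int_le_one (p := p) (j : ℤ)) with h | h
    · exfalso
      rw [Padic.norm_intCast_lt_one_iff] at h
      have := Int.le_of_dvd (by exact_mod_cast hj.1) h
      omega
    · exact h
  have hjnorm' : ‖((j : ℕ) : ℚ_[p])‖ = 1 := by
    have : ((j : ℤ) : ℚ_[p]) = ((j : ℕ) : ℚ_[p]) := by push_cast; ring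
    rwa [this] at hjnorm
  have hsum : ∀ x : ℚ_[p], ‖x‖ < 1 → ‖x + (j : ℚ_[p])‖ = 1 := by
    intro x hx
    have hne : ‖x‖ ≠ ‖(j : ℚ_[p])‖ := by rw [hjnorm']; exact ne_of_lt hx
    rw [Padic.add_eq_max_of_ne hne, hjnorm']
    exact max_eq_right (le_of_lt (hjnorm' ▸ hx))
  have hppow : ‖((p : ℚ_[p]) ^ i)‖ = (p : ℝ) ^ (-(i : ℤ)) := by
    rw [norm_pow, Padic.norm_p, inv_pow, ← zpow_natCast, ← zpow_neg]
  have hlt1 : (p : ℝ) ^ (-(i : ℤ)) < 1 := by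
    apply zpow_lt_one_of_neg₀ (by exact_mod_cast hp.out.one_lt)
    omega
  constructor
  · intro x hx
    rw [norm_div, hsum x hx, div_one, hppow]
    exact hlt1
  · intro x y hx hy
    have hx1 := hsum x hx
    have hy1 := hsum y hy
    have hxne : x + (j : ℚ_[p]) ≠ 0 := by
      intro h; rw [h, norm_zero] at hx1; norm_num at hx1
    have hyne : y + (j : ℚ_[p]) ≠ 0 := by
      intro h; rw [h, norm_zero] at hy1; norm_num at hy1
    rw [div_sub_div _ _ hxne hyne]
    have hnum : (p : ℚ_[p]) ^ i * (y + (j : ℚ_[p])) - (x + (j : ℚ_[p])) * (p : ℚ_[p]) ^ i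
        = (p : ℚ_[p]) ^ i * (y - x) := by ring
    rw [hnum, norm_div, norm_mul, norm_mul, hx1, hy1, hppow]
    rw [show ‖y - x‖ = ‖x - y‖ by rw [← norm_neg]; ring_nf]
    ring
end

section
/- For any positive integer M ≥ 2 and prime p, the images f_{ij}(pℤ_p) for 1 ≤ i ≤ M and 1 ≤ j ≤ p−1, where f_{ij}(x) = p^i/(x+j), are pairwise disjoint subsets of pℤ_p. -/
/-!
A unit `x + j` (with `‖x‖ < 1` and `0 < j < p`) has norm one, so `‖p ^ i / (x + j)‖ = p ^ (-i)`:
the image of `f_{ij}` lies in `pℤ_p` and its norm determines `i`. Once `i = i'`, equal values force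
`x + j = x' + j'`, so `p ∣ j' - j`, and `j = j'` because both are residues modulo `p`.
-/

namespace Padic

variable {p : ℕ} [hp : Fact p.Prime]

theorem norm_add_natCast_eq_one {x : ℚ_[p]} (hx : ‖x‖ < 1) {j : ℕ} (hj : p.Coprime j) :
    ‖x + j‖ = 1 := by
  have hj₁ : ‖(j : ℚ_[p])‖ = 1 := norm_natCast_eq_one_iff.mpr hj
  rw [IsUltrametricDist.norm_add_eq_max_of_norm_ne_norm (hj₁ ▸ hx.ne), hj₁, max_eq_right hx.le]

theorem norm_pow_div_add_natCast {x : ℚ_[p]} (hx : ‖x‖ < 1) {j : ℕ} (hj : p.Coprime j) (i : ℕ) :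
    ‖(p : ℚ_[p]) ^ i / (x + j)‖ = (p : ℝ) ^ (-(i : ℤ)) := by
  rw [norm_div, norm_add_natCast_eq_one hx hj, div_one, norm_p_pow]

theorem norm_pow_div_add_natCast_lt_one {x : ℚ_[p]} (hx : ‖x‖ < 1) {j : ℕ} (hj : p.Coprime j)
    {i : ℕ} (hi : 0 < i) : ‖(p : ℚ_[p]) ^ i / (x + j)‖ < 1 := by
  rw [norm_pow_div_add_natCast hx hj]
  exact zpow_lt_one_of_neg₀ (mod_cast hp.out.one_lt) (by omega)

theorem eq_of_add_natCast_eq_add_natCast {x x' : ℚ_[p]} (hx : ‖x‖ < 1) (hx' : ‖x'‖ < 1)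
    {j j' : ℕ} (hj : j < p) (hj' : j' < p) (h : x + j = x' + j') : j = j' := by
  have hdiff : (((j' : ℤ) - j : ℤ) : ℚ_[p]) = x + -x' := by
    push_cast
    linear_combination -h
  have hlt : ‖(((j' : ℤ) - j : ℤ) : ℚ_[p])‖ < 1 := by
    rw [hdiff]
    exact (IsUltrametricDist.norm_add_le_max _ _).trans_lt (max_lt hx (by rwa [norm_neg]))
  exact (Nat.modEq_iff_dvd.mpr (norm_intCast_lt_one_iff.mp hlt)).eq_of_lt_of_lt hj hj'

theorem pow_div_add_natCast_inj {x x' : ℚ_[p]} (hx : ‖x‖ < 1) (hx' : ‖x'‖ < 1) {i i' j j' : ℕ}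
    (hj : p.Coprime j) (hjp : j < p) (hj' : p.Coprime j') (hjp' : j' < p)
    (h : (p : ℚ_[p]) ^ i / (x + j) = (p : ℚ_[p]) ^ i' / (x' + j')) : i = i' ∧ j = j' := by
  have hi : i = i' := by
    have hnorm := norm_pow_div_add_natCast hx hj i
    rw [h, norm_pow_div_add_natCast hx' hj'] at hnorm
    have := zpow_right_injective₀ (mod_cast hp.out.pos) (mod_cast hp.out.one_lt.ne') hnorm
    omega
  subst hi
  have hpow : (p : ℚ_[p]) ^ i ≠ 0 := pow_ne_zero _ (mod_cast hp.out.ne_zero)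
  refine ⟨rfl, eq_of_add_natCast_eq_add_natCast hx hx' hjp hjp' ?_⟩
  simpa [div_eq_mul_inv, hpow] using h

end Padic

theorem stmt_11_general (p : ℕ) [hp : Fact p.Prime] (M : ℕ) :
    (∀ i j : ℕ, 1 ≤ i → i ≤ M → 1 ≤ j → j ≤ p - 1 →
      (fun x : ℚ_[p] => (p : ℚ_[p]) ^ i / (x + (j : ℚ_[p]))) '' {x : ℚ_[p] | ‖x‖ < 1}
        ⊆ {x : ℚ_[p] | ‖x‖ < 1}) ∧
    (∀ i j i' j' : ℕ, 1 ≤ i → i ≤ M → 1 ≤ j → j ≤ p - 1 →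
      1 ≤ i' → i' ≤ M → 1 ≤ j' → j' ≤ p - 1 → (i, j) ≠ (i', j') →
      Disjoint
        ((fun x : ℚ_[p] => (p : ℚ_[p]) ^ i / (x + (j : ℚ_[p]))) '' {x : ℚ_[p] | ‖x‖ < 1})
        ((fun x : ℚ_[p] => (p : ℚ_[p]) ^ i' / (x + (j' : ℚ_[p]))) '' {x : ℚ_[p] | ‖x‖ < 1})) := by
  have residue {j : ℕ} (hj₁ : 1 ≤ j) (hj₂ : j ≤ p - 1) : p.Coprime j ∧ j < p := by
    have hjp : j < p := by have := hp.out.pos; omega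
    exact ⟨(Nat.Prime.coprime_iff_not_dvd hp.out).mpr (Nat.not_dvd_of_pos_of_lt hj₁ hjp), hjp⟩
  refine ⟨?_, ?_⟩
  · rintro i j hi - hj₁ hj₂ - ⟨x, hx, rfl⟩
    exact Padic.norm_pow_div_add_natCast_lt_one hx (residue hj₁ hj₂).1 hi
  · rintro i j i' j' - - hj₁ hj₂ - - hj₁' hj₂' hne
    refine Set.disjoint_left.mpr ?_
    rintro - ⟨x, hx, rfl⟩ ⟨x', hx', h⟩
    obtain ⟨hj, hjp⟩ := residue hj₁ hj₂
    obtain ⟨hj', hjp'⟩ := residue hj₁' hj₂'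
    obtain ⟨rfl, rfl⟩ := Padic.pow_div_add_natCast_inj hx hx' hj hjp hj' hjp' h.symm
    exact hne rfl

/-- For `M ≥ 2`, the images `f_{ij}(pℤ_p)` for `1 ≤ i ≤ M`, `1 ≤ j ≤ p-1`, where
`f_{ij}(x) = p^i/(x+j)`, are pairwise disjoint subsets of `pℤ_p`. -/
theorem stmt_11 (p : ℕ) [hp : Fact p.Prime] (M : ℕ) (hM : 2 ≤ M) :
    (∀ i j : ℕ, 1 ≤ i → i ≤ M → 1 ≤ j → j ≤ p - 1 →
      (fun x : ℚ_[p] => (p : ℚ_[p]) ^ i / (x + (j : ℚ_[p]))) '' {x : ℚ_[p] | ‖x‖ < 1}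
        ⊆ {x : ℚ_[p] | ‖x‖ < 1}) ∧
    (∀ i j i' j' : ℕ, 1 ≤ i → i ≤ M → 1 ≤ j → j ≤ p - 1 →
      1 ≤ i' → i' ≤ M → 1 ≤ j' → j' ≤ p - 1 → (i, j) ≠ (i', j') →
      Disjoint
        ((fun x : ℚ_[p] => (p : ℚ_[p]) ^ i / (x + (j : ℚ_[p]))) '' {x : ℚ_[p] | ‖x‖ < 1})
        ((fun x : ℚ_[p] => (p : ℚ_[p]) ^ i' / (x + (j' : ℚ_[p]))) '' {x : ℚ_[p] | ‖x‖ < 1})) :=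
  stmt_11_general p (hp := hp) M
end

section
/- For each real α > 0, there exists a unique real s ∈ (0, 1) such that ∑_{n≥1} (p−1) p^{−(n+α)s} = 1; equivalently, p^{αs}(p^s − 1) = p − 1. Moreover, viewed as a function s(α), it is continuous and strictly decreasing on (0, ∞), with s(α) → 1 as α → 0⁺ and s(α) → 0 as α → ∞. -/
/-!
Summing the geometric series,
`∑_{n ≥ 1} (p - 1) p ^ (-(n + α) s) = (p - 1) / (p ^ (α s) (p ^ s - 1))`, so the equation for
`s` reads `p ^ (α s) (p ^ s - 1) = p - 1`. Its left side vanishes at `s = 0`, exceeds `p - 1` at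
`s = 1`, and is strictly increasing both in `s` and in `α`; this gives existence, uniqueness and
strict decrease of `s(α)`. Solving the same equation for `α`,
`α = log_p ((p - 1) / (p ^ s - 1)) / s`, shows that `s(α)` takes every value in `(0, 1)`, and a
strictly antitone map of `(0, ∞)` onto `(0, 1)` is continuous, with limit `1` at `0⁺` and `0`
at `∞`.
-/

open Set Filter Topology Real

section AntitoneParametrization

variable {S : ℝ → ℝ} {a b c : ℝ}

lemma StrictAntiOn.continuousOn_of_image_Ioi_eq_Ioo (hS : StrictAntiOn S (Ioi a))
    (himage : S '' Ioi a = Ioo b c) : ContinuousOn S (Ioi a) := by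
  intro x hx
  refine (StrictMonoOn.continuousAt_of_image_mem_nhds (β := ℝᵒᵈ) hS.dual_right
    (Ioi_mem_nhds hx) ?_).continuousWithinAt
  change S '' Ioi a ∈ 𝓝 (S x)
  rw [himage]
  exact isOpen_Ioo.mem_nhds (himage ▸ mem_image_of_mem S hx)

lemma AntitoneOn.tendsto_nhdsGT_of_image_Ioi_eq_Ioo (hS : AntitoneOn S (Ioi a))
    (himage : S '' Ioi a = Ioo b c) (hbc : b < c) : Tendsto S (𝓝[>] a) (𝓝 c) := by
  have := hS.tendsto_nhdsGT (himage ▸ bddAbove_Ioo)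
  rwa [himage, csSup_Ioo hbc] at this

lemma AntitoneOn.tendsto_atTop_of_image_Ioi_eq_Ioo (hS : AntitoneOn S (Ioi a))
    (himage : S '' Ioi a = Ioo b c) (hbc : b < c) : Tendsto S atTop (𝓝 b) := by
  refine tendsto_order.2 ⟨fun t ht => ?_, fun t ht => ?_⟩
  · filter_upwards [eventually_gt_atTop a] with x hx
    exact ht.trans (himage ▸ mem_image_of_mem S hx).1
  · obtain ⟨u, hbu, hut⟩ := exists_between (lt_min ht hbc)
    obtain ⟨y, hy, rfl⟩ : u ∈ S '' Ioi a :=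
      himage ▸ ⟨hbu, hut.trans_le (min_le_right t c)⟩
    filter_upwards [eventually_gt_atTop y] with x hx
    exact (hS hy (hy.trans hx) hx.le).trans_lt (hut.trans_le (min_le_left t c))

end AntitoneParametrization

noncomputable def geomDenom (q α s : ℝ) : ℝ := q ^ (α * s) * (q ^ s - 1)

section GeomDenom

variable {q α β s t : ℝ}

lemma continuous_geomDenom (hq : 0 < q) (α : ℝ) : Continuous (geomDenom q α) := by
  have hpow := continuous_const_rpow hq.ne'
  exact (hpow.comp (continuous_const_mul α)).mul (hpow.sub continuous_const)

lemma geomDenom_pos (hq : 1 < q) (hs : 0 < s) : 0 < geomDenom q α s :=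
  mul_pos (rpow_pos_of_pos (by linarith) _) (sub_pos.2 (one_lt_rpow hq hs))

lemma strictMonoOn_geomDenom (hq : 1 < q) (hα : 0 ≤ α) :
    StrictMonoOn (geomDenom q α) (Ici 0) := by
  intro s (hs : 0 ≤ s) t (ht : 0 ≤ t) hst
  have h1 : q ^ (α * s) ≤ q ^ (α * t) :=
    rpow_le_rpow_of_exponent_le hq.le (mul_le_mul_of_nonneg_left hst.le hα)
  have h2 : q ^ s < q ^ t := rpow_lt_rpow_of_exponent_lt hq hst
  have h3 : 1 ≤ q ^ s := one_le_rpow hq.le hs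
  have h4 : 0 < q ^ (α * t) := rpow_pos_of_pos (by linarith) _
  unfold geomDenom
  nlinarith [mul_le_mul_of_nonneg_right h1 (sub_nonneg.2 h3)]

lemma geomDenom_lt_geomDenom (hq : 1 < q) (hαβ : α < β) (hs : 0 < s) :
    geomDenom q α s < geomDenom q β s :=
  mul_lt_mul_of_pos_right (rpow_lt_rpow_of_exponent_lt hq (mul_lt_mul_of_pos_right hαβ hs))
    (sub_pos.2 (one_lt_rpow hq hs))

lemma exists_geomDenom_eq (hq : 1 < q) (hα : 0 < α) :
    ∃ s ∈ Ioo (0 : ℝ) 1, geomDenom q α s = q - 1 := by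
  have h0 : geomDenom q α 0 = 0 := by simp [geomDenom]
  have h1 : q - 1 < geomDenom q α 1 := by
    simpa [geomDenom] using mul_lt_mul_of_pos_right (one_lt_rpow hq hα) (sub_pos.2 hq)
  exact intermediate_value_Ioo zero_le_one (continuous_geomDenom (by linarith) α).continuousOn
    (by rw [h0]; exact ⟨sub_pos.2 hq, h1⟩)

lemma exists_pos_geomDenom_eq (hq : 1 < q) (ht : t ∈ Ioo (0 : ℝ) 1) :
    ∃ α > 0, geomDenom q α t = q - 1 := by
  have hqt : 0 < q ^ t - 1 := sub_pos.2 (one_lt_rpow hq ht.1)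
  have hratio : 1 < (q - 1) / (q ^ t - 1) :=
    (one_lt_div hqt).2 (sub_lt_sub_right (rpow_lt_self_of_one_lt hq ht.2) 1)
  refine ⟨logb q ((q - 1) / (q ^ t - 1)) / t, div_pos (logb_pos hq hratio) ht.1, ?_⟩
  rw [geomDenom, div_mul_cancel₀ _ ht.1.ne', rpow_logb (by linarith) hq.ne' (by linarith),
    div_mul_cancel₀ _ hqt.ne']

lemma tsum_eq_div_geomDenom (hq : 1 < q) (α : ℝ) (hs : 0 < s) :
    ∑' n : ℕ, (q - 1) * q ^ (-(((n : ℝ) + 1) + α) * s) = (q - 1) / geomDenom q α s := by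
  have hq0 : 0 < q := by linarith
  have hr0 : 0 < q ^ (-s) := rpow_pos_of_pos hq0 _
  have hr1 : q ^ (-s) < 1 := rpow_lt_one_of_one_lt_of_neg hq (neg_neg_of_pos hs)
  have hterm (n : ℕ) : (q - 1) * q ^ (-(((n : ℝ) + 1) + α) * s)
      = ((q - 1) * q ^ (-(α * s + s))) * (q ^ (-s)) ^ n := by
    rw [mul_assoc, ← rpow_natCast, ← rpow_mul hq0.le, ← rpow_add hq0]
    ring_nf
  rw [tsum_congr hterm, tsum_mul_left, tsum_geometric_of_lt_one hr0.le hr1, rpow_neg hq0.le,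
    rpow_neg hq0.le, rpow_add hq0, geomDenom]
  have : q ^ s - 1 ≠ 0 := (sub_pos.2 (one_lt_rpow hq hs)).ne'
  field_simp

lemma tsum_eq_one_iff (hq : 1 < q) (α : ℝ) (hs : 0 < s) :
    ∑' n : ℕ, (q - 1) * q ^ (-(((n : ℝ) + 1) + α) * s) = 1 ↔ geomDenom q α s = q - 1 := by
  rw [tsum_eq_div_geomDenom hq α hs, div_eq_one_iff_eq (geomDenom_pos hq hs).ne', eq_comm]

end GeomDenom

section GeomDenomRoot

variable {q : ℝ} {S : ℝ → ℝ}

lemma eq_of_geomDenom_eq (hq : 1 < q) {α s t : ℝ} (hα : 0 ≤ α) (hs : 0 ≤ s) (ht : 0 ≤ t)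
    (h : geomDenom q α s = geomDenom q α t) : s = t :=
  (strictMonoOn_geomDenom hq hα).injOn hs ht h

lemma strictAntiOn_of_geomDenom_eq (hq : 1 < q)
    (hS : ∀ α > 0, S α ∈ Ioo (0 : ℝ) 1 ∧ geomDenom q α (S α) = q - 1) :
    StrictAntiOn S (Ioi 0) := by
  intro α (hα : 0 < α) β (hβ : 0 < β) hαβ
  refine (strictMonoOn_geomDenom hq hβ.le).lt_iff_lt (hS β hβ).1.1.le (hS α hα).1.1.le |>.1 ?_
  calc geomDenom q β (S β) = geomDenom q α (S α) := by rw [(hS α hα).2, (hS β hβ).2]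
    _ < geomDenom q β (S α) := geomDenom_lt_geomDenom hq hαβ (hS α hα).1.1

lemma image_Ioi_eq_Ioo_of_geomDenom_eq (hq : 1 < q)
    (hS : ∀ α > 0, S α ∈ Ioo (0 : ℝ) 1 ∧ geomDenom q α (S α) = q - 1) :
    S '' Ioi 0 = Ioo 0 1 := by
  refine Subset.antisymm (image_subset_iff.2 fun α hα => (hS α hα).1) fun t ht => ?_
  obtain ⟨α, hα, hαt⟩ := exists_pos_geomDenom_eq hq ht
  refine ⟨α, hα, eq_of_geomDenom_eq hq hα.le (hS α hα).1.1.le ht.1.le ?_⟩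
  rw [(hS α hα).2, hαt]

end GeomDenomRoot

/-- For each `α > 0` there is a unique `s = s(α) ∈ (0,1)` with
`∑_{n ≥ 1} (p-1) p^{-(n+α)s} = 1`, equivalently `p^{αs}(p^s - 1) = p - 1`; moreover
`α ↦ s(α)` is continuous and strictly decreasing on `(0, ∞)`, tends to `1` as `α → 0⁺`
and to `0` as `α → ∞`. -/
theorem stmt_12 (p : ℕ) (hp : p.Prime) :
    ∃ S : ℝ → ℝ,
      (∀ α : ℝ, 0 < α →
        S α ∈ Set.Ioo (0 : ℝ) 1 ∧
        (∑' n : ℕ, ((p : ℝ) - 1) * (p : ℝ) ^ (-(((n : ℝ) + 1) + α) * S α)) = 1 ∧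
        (p : ℝ) ^ (α * S α) * ((p : ℝ) ^ (S α) - 1) = (p : ℝ) - 1 ∧
        (∀ s : ℝ, s ∈ Set.Ioo (0 : ℝ) 1 →
          (∑' n : ℕ, ((p : ℝ) - 1) * (p : ℝ) ^ (-(((n : ℝ) + 1) + α) * s)) = 1 → s = S α)) ∧
      ContinuousOn S (Set.Ioi 0) ∧
      StrictAntiOn S (Set.Ioi 0) ∧
      Filter.Tendsto S (nhdsWithin 0 (Set.Ioi 0)) (nhds 1) ∧
      Filter.Tendsto S Filter.atTop (nhds 0) := by
  have hq : (1 : ℝ) < p := by exact_mod_cast hp.one_lt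
  choose! S hS using fun α (hα : 0 < α) => exists_geomDenom_eq hq hα
  have hanti := strictAntiOn_of_geomDenom_eq hq hS
  have himage := image_Ioi_eq_Ioo_of_geomDenom_eq hq hS
  refine ⟨S, fun α hα => ⟨(hS α hα).1, ?_, (hS α hα).2, fun s hs hsum => ?_⟩,
    hanti.continuousOn_of_image_Ioi_eq_Ioo himage, hanti,
    hanti.antitoneOn.tendsto_nhdsGT_of_image_Ioi_eq_Ioo himage zero_lt_one,
    hanti.antitoneOn.tendsto_atTop_of_image_Ioi_eq_Ioo himage zero_lt_one⟩
  · exact (tsum_eq_one_iff hq α (hS α hα).1.1).2 (hS α hα).2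
  · refine eq_of_geomDenom_eq hq hα.le hs.1.le (hS α hα).1.1.le ?_
    rw [(tsum_eq_one_iff hq α hs.1).1 hsum, (hS α hα).2]
end
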